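/- arXiv:2309.09149 — 2 statements merged into one kernel-verified Lean document; each statement's English description precedes it below -/
import Mathlib

section
/- Let a, b be coprime positive integers. Then every integer n > (s+1)ab - a - b has at least s+1 representations as n = ax + by with x, y non-negative integers. -/
/-- `d2 a b n` is the number of pairs `(x,y)` of non-negative integers
with `a*x + b*y = n`. -/
noncomputable def d2 (a b : ℕ) (n : ℤ) : ℕ :=
  Nat.card {p : ℕ × ℕ // (a : ℤ) * p.1 + (b : ℤ) * p.2 = n}

/-- Every integer `n > (s+1)ab - a - b` has at least `s+1` representations
as `n = a*x + b*y` with non-negative integers `x`, `y`. -/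
theorem stmt1 (a b : ℕ) (ha : 0 < a) (hb : 0 < b) (hab : Nat.gcd a b = 1) (s : ℕ)
    (n : ℤ) (hn : ((s : ℤ) + 1) * a * b - a - b < n) :
    s + 1 ≤ d2 a b n := by
  have ha' : (0:ℤ) < a := by exact_mod_cast ha
  have hb' : (0:ℤ) < b := by exact_mod_cast hb
  have ha1 : (1:ℤ) ≤ a := ha'
  have hb1 : (1:ℤ) ≤ b := hb'
  have hs0 : (0:ℤ) ≤ s := Int.ofNat_nonneg s
  have hn0 : 0 ≤ n := by
    nlinarith [mul_nonneg hs0 (mul_nonneg ha'.le hb'.le),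
      mul_nonneg (sub_nonneg.mpr ha1) (sub_nonneg.mpr hb1)]
  -- Bezout
  have hbez : (a:ℤ) * Nat.gcdA a b + b * Nat.gcdB a b = 1 := by
    have h := Nat.gcd_eq_gcd_ab a b
    rw [hab] at h; push_cast at h; linarith
  obtain ⟨x0, y0, hxy⟩ : ∃ x0 y0 : ℤ, (a:ℤ) * x0 + (b:ℤ) * y0 = n :=
    ⟨n * Nat.gcdA a b, n * Nat.gcdB a b, by nlinarith [hbez]⟩
  obtain ⟨q, r, hr0, hrb, hqr⟩ : ∃ q r : ℤ, 0 ≤ r ∧ r < b ∧ x0 = b * q + r :=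
    ⟨x0 / b, x0 % b, Int.emod_nonneg x0 (by positivity), Int.emod_lt_of_pos x0 hb',
      (Int.mul_ediv_add_emod x0 b).symm⟩
  set M : ℤ := y0 + a * q with hMdef
  have hM : (a:ℤ) * r + b * M = n := by
    rw [hMdef]; linear_combination hxy - (a:ℤ) * hqr
  have hMs : (a:ℤ) * s ≤ M := by
    have h1 : (b:ℤ) * (a * s - 1) < b * M := by nlinarith
    have h2 : (a:ℤ) * s - 1 < M := lt_of_mul_lt_mul_left h1 hb'.le
    have := Int.lt_iff_add_one_le.mp h2
    linarith
  -- finiteness of the solution set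
  have hfin : Finite {p : ℕ × ℕ // (a : ℤ) * p.1 + (b : ℤ) * p.2 = n} := by
    have hsub : {p : ℕ × ℕ | (a : ℤ) * p.1 + (b : ℤ) * p.2 = n} ⊆
        Set.Iic (n.toNat, n.toNat) := by
      intro p hp
      simp only [Set.mem_setOf_eq] at hp
      have h1 : (p.1:ℤ) ≤ n := by nlinarith [Int.ofNat_nonneg p.1, Int.ofNat_nonneg p.2]
      have h2 : (p.2:ℤ) ≤ n := by nlinarith [Int.ofNat_nonneg p.1, Int.ofNat_nonneg p.2]
      rw [Set.mem_Iic, Prod.le_def]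
      exact ⟨(Int.le_toNat hn0).mpr h1, (Int.le_toNat hn0).mpr h2⟩
    exact ((Set.finite_Iic _).subset hsub).to_subtype
  -- the s+1 representations
  have key : ∀ i : Fin (s+1), 0 ≤ r + b * (i:ℤ) ∧ 0 ≤ M - a * (i:ℤ) := by
    intro i
    have hi : (i:ℤ) ≤ s := by exact_mod_cast Nat.lt_succ_iff.mp i.isLt
    have hi0 : (0:ℤ) ≤ (i:ℤ) := Int.ofNat_nonneg _
    have h4 : (0:ℤ) ≤ b * i := mul_nonneg hb'.le hi0
    have h5 : (a:ℤ) * i ≤ a * s := mul_le_mul_of_nonneg_left hi ha'.le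
    exact ⟨by linarith, by linarith⟩
  let f : Fin (s+1) → {p : ℕ × ℕ // (a : ℤ) * p.1 + (b : ℤ) * p.2 = n} := fun i =>
    ⟨((r + b * (i:ℤ)).toNat, (M - a * (i:ℤ)).toNat), by
      rw [Int.toNat_of_nonneg (key i).1, Int.toNat_of_nonneg (key i).2]
      linear_combination hM⟩
  have hinj : Function.Injective f := by
    intro i j hij
    have h1 : (r + b * (i:ℤ)).toNat = (r + b * (j:ℤ)).toNat := congrArg (·.1.1) hij
    have h2 : r + b * (i:ℤ) = r + b * (j:ℤ) := by
      rw [← Int.toNat_of_nonneg (key i).1, ← Int.toNat_of_nonneg (key j).1, h1]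
    have h3 : (i:ℤ) = (j:ℤ) := by
      have := mul_left_cancel₀ (ne_of_gt hb') (by linarith : (b:ℤ) * i = b * j)
      exact this
    exact Fin.ext (by exact_mod_cast h3)
  calc s + 1 = Nat.card (Fin (s+1)) := by simp
    _ ≤ d2 a b n := Nat.card_le_card_of_injective f hinj
end

section
/- Let a, b be coprime positive integers, s ≥ 0, and c a positive integer divisible by a or by b. If 0 ≤ j₁ < j₂ and j₂·c ≤ g(a,b;s), then d(g(a,b;s) − j₂c; a, b) ≤ d(g(a,b;s) − j₁c; a, b). That is, the sequence j ↦ d(g(a,b;s) − jc; a, b) is non-increasing on 0 ≤ j ≤ g(a,b;s)/c. -/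
lemma d2_finite (a b : ℕ) (ha : 0 < a) (hb : 0 < b) (n : ℤ) :
    Finite {p : ℕ × ℕ // (a : ℤ) * p.1 + (b : ℤ) * p.2 = n} := by
  apply Finite.of_injective (fun p : {p : ℕ × ℕ // (a : ℤ) * p.1 + (b : ℤ) * p.2 = n} =>
    (⟨p.val.1, by
      have h := p.prop
      have h1 : (0:ℤ) ≤ (b : ℤ) * p.val.2 := by positivity
      have h2 : (p.val.1 : ℤ) ≤ (a : ℤ) * p.val.1 := by
        nlinarith [Int.ofNat_le.mpr ha, Int.natCast_nonneg p.val.1]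
      have h3 : (p.val.1 : ℤ) ≤ n := by linarith
      omega⟩ : Fin (n.toNat + 1)))
  rintro ⟨⟨x1, y1⟩, h1⟩ ⟨⟨x2, y2⟩, h2⟩ h
  simp only [Fin.mk.injEq] at h
  subst h
  simp only [Subtype.mk.injEq, Prod.mk.injEq, true_and]
  have hb' : (b : ℤ) ≠ 0 := by exact_mod_cast hb.ne'
  have : (b : ℤ) * y1 = (b : ℤ) * y2 := by linarith
  have := mul_left_cancel₀ hb' this
  exact_mod_cast this

lemma d2_le_step (a b : ℕ) (ha : 0 < a) (hb : 0 < b) (c : ℕ)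
    (hdvd : a ∣ c ∨ b ∣ c) (n : ℤ) :
    d2 a b n ≤ d2 a b (n + c) := by
  have := d2_finite a b ha hb (n + c)
  rcases hdvd with ⟨k, hk⟩ | ⟨k, hk⟩
  · apply Nat.card_le_card_of_injective
      (fun p : {p : ℕ × ℕ // (a : ℤ) * p.1 + (b : ℤ) * p.2 = n} =>
        (⟨(p.val.1 + k, p.val.2), by
          have h := p.prop
          push_cast [hk]
          push_cast at h
          ring_nf
          ring_nf at h
          linarith⟩ : {p : ℕ × ℕ // (a : ℤ) * p.1 + (b : ℤ) * p.2 = n + c}))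
    rintro ⟨⟨x1, y1⟩, h1⟩ ⟨⟨x2, y2⟩, h2⟩ h
    simp only [Subtype.mk.injEq, Prod.mk.injEq] at h ⊢
    omega
  · apply Nat.card_le_card_of_injective
      (fun p : {p : ℕ × ℕ // (a : ℤ) * p.1 + (b : ℤ) * p.2 = n} =>
        (⟨(p.val.1, p.val.2 + k), by
          have h := p.prop
          push_cast [hk]
          push_cast at h
          ring_nf
          ring_nf at h
          linarith⟩ : {p : ℕ × ℕ // (a : ℤ) * p.1 + (b : ℤ) * p.2 = n + c}))
    rintro ⟨⟨x1, y1⟩, h1⟩ ⟨⟨x2, y2⟩, h2⟩ h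
    simp only [Subtype.mk.injEq, Prod.mk.injEq] at h ⊢
    omega

lemma d2_le_iter (a b : ℕ) (ha : 0 < a) (hb : 0 < b) (c : ℕ)
    (hdvd : a ∣ c ∨ b ∣ c) (n : ℤ) (m : ℕ) :
    d2 a b n ≤ d2 a b (n + m * c) := by
  induction m with
  | zero => simp
  | succ m ih =>
    calc d2 a b n ≤ d2 a b (n + m * c) := ih
      _ ≤ d2 a b (n + m * c + c) := d2_le_step a b ha hb c hdvd _
      _ = d2 a b (n + (m + 1 : ℕ) * c) := by push_cast; ring_nf

/-- If `c` is divisible by `a` or by `b`, then `j ↦ d(g(a,b;s) - j*c; a, b)` is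
non-increasing for `0 ≤ j ≤ g(a,b;s)/c`, where `g(a,b;s) = (s+1)ab - a - b`. -/
theorem stmt6 (a b : ℕ) (ha : 0 < a) (hb : 0 < b) (hab : Nat.gcd a b = 1)
    (s : ℕ) (c : ℕ) (hc : 0 < c) (hdvd : a ∣ c ∨ b ∣ c)
    (j₁ j₂ : ℕ) (hlt : j₁ < j₂)
    (hj₂ : (j₂ : ℤ) * c ≤ ((s : ℤ) + 1) * a * b - a - b) :
    d2 a b ((((s : ℤ) + 1) * a * b - a - b) - j₂ * c) ≤
      d2 a b ((((s : ℤ) + 1) * a * b - a - b) - j₁ * c) := by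
  have h := d2_le_iter a b ha hb c hdvd
    ((((s : ℤ) + 1) * a * b - a - b) - j₂ * c) (j₂ - j₁)
  convert h using 2
  have : (((j₂ - j₁ : ℕ)) : ℤ) = (j₂ : ℤ) - j₁ := by
    have := hlt.le
    push_cast [this]
    ring
  rw [this]
  ring
end
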